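/- arXiv:1704.04729 — 7 statements merged into one kernel-verified Lean document; each statement's English description precedes it below -/
import Mathlib

section
/- Let (A, m, v) be a C*-Frobenius algebra in Hilb_f and let φ = v* : A → ℂ be the adjoint of the unit map v. Then there exists a unique conjugate-linear map A → A, x ↦ x*, such that ⟨x, y⟩ = φ(y* x) for all x, y ∈ A. This map is an involution making A a *-algebra (i.e. (x*)* = x and (x y)* = y* x*), it satisfies ⟨a x, y⟩ = ⟨x, a* y⟩ for all a, x, y ∈ A (left multiplication is a *-representation of A on the Hilbert space A), and with this involution and the norm given by the operator norm of left multiplication, A is a C*-algebra. -/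
/-!
STATEMENT 1.  Let (A, m, v) be a C*-Frobenius algebra in Hilb_f and φ = v* the adjoint of the
unit.  Then there is a unique conjugate-linear map x ↦ x* on A with ⟨x,y⟩ = φ(y* x)
(in Mathlib's convention, conjugate-linear in the first slot: ⟪x, y⟫ = φ(x* y)); it is an
involution making A a *-algebra, left multiplication is a *-representation of A on the Hilbert
space A, and with this involution and the norm given by the operator norm of left
multiplication, A is a C*-algebra (injectivity of the left regular representation and the
C*-identity for that norm).

Conventions.  The multiplication is a bilinear map `m : A →ₗ[ℂ] A →ₗ[ℂ] A` with unit `e = v(1)`.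
The adjoint m* : A → A ⊗ A is encoded as a map `mstar` satisfying the pairing identity
⟪a ⊗ b, m* y⟫ = ⟪m(a ⊗ b), y⟫, where ⟪a ⊗ b, ·⟫ is implemented by `tensPair a b`.
The Frobenius condition (m ⊗ id)(id ⊗ m*) = m* m = (id ⊗ m)(m* ⊗ id) is expressed
elementwise on pure tensors a ⊗ b.  φ = v* is the functional y ↦ ⟪e, y⟫.
-/

open scoped TensorProduct

/-- The linear functional `⟪a ⊗ b, ·⟫` on `E ⊗[ℂ] F` induced by the inner products. -/
noncomputable def tensPair {E F : Type*} [NormedAddCommGroup E] [InnerProductSpace ℂ E]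
    [NormedAddCommGroup F] [InnerProductSpace ℂ F] (a : E) (b : F) :
    TensorProduct ℂ E F →ₗ[ℂ] ℂ :=
  TensorProduct.lift ((LinearMap.mul ℂ ℂ).compl₁₂ (innerₛₗ ℂ a) (innerₛₗ ℂ b))

/-!
With `φ = ⟪e, ·⟫`, the Frobenius condition gives `m* y = (id ⊗ R_y)(m* e)`, where `R_y` is right
multiplication by `y`; pairing with `a ⊗ x` and moving `R_y` across the inner product shows that
the Riesz representative `a*` of `y ↦ φ(a y)` satisfies `⟪a x, y⟫ = ⟪x, a* y⟫`.  So left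
multiplication by `a*` is the adjoint of left multiplication by `a`, and the remaining claims
follow: `a ↦ a*` is an anti-multiplicative involution, and the operator norm of the left regular
representation satisfies the C*-identity because `‖T† T‖ = ‖T‖²` for operators on a Hilbert space.
-/

open scoped InnerProductSpace

theorem tensPair_map_id {E F G : Type*} [NormedAddCommGroup E] [InnerProductSpace ℂ E]
    [NormedAddCommGroup F] [InnerProductSpace ℂ F] [FiniteDimensional ℂ F]
    [NormedAddCommGroup G] [InnerProductSpace ℂ G] [FiniteDimensional ℂ G]
    (f : G →ₗ[ℂ] F) (a : E) (x : F) (t : E ⊗[ℂ] G) :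
    tensPair a x (TensorProduct.map LinearMap.id f t) = tensPair a (LinearMap.adjoint f x) t := by
  induction t using TensorProduct.induction_on with
  | zero => simp
  | tmul u v => simp [tensPair, LinearMap.adjoint_inner_left]
  | add u v hu hv => simp only [map_add, hu, hv]

namespace FrobeniusAlgebra

variable {A : Type*} [NormedAddCommGroup A] [InnerProductSpace ℂ A] [FiniteDimensional ℂ A]
  (m : A →ₗ[ℂ] A →ₗ[ℂ] A) (e : A)

noncomputable def star : A →ₗ⋆[ℂ] A where
  toFun a := (InnerProductSpace.toDual ℂ A).symm
    ((innerSL ℂ e).comp (LinearMap.toContinuousLinearMap (m a)))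
  map_add' x y := by simp
  map_smul' c x := by simpa using map_smulₛₗ (InnerProductSpace.toDual ℂ A).symm c _

theorem inner_star (a y : A) : ⟪star m e a, y⟫_ℂ = ⟪e, m a y⟫_ℂ := by
  simp [star, InnerProductSpace.toDual_symm_apply]

theorem inner_mul_left_eq_inner_star_mul (hul : ∀ a : A, m e a = a) (mstar : A → A ⊗[ℂ] A)
    (hadj : ∀ a b y : A, tensPair a b (mstar y) = ⟪m a b, y⟫_ℂ)
    (hfrob₂ : ∀ a b : A, TensorProduct.map LinearMap.id (m.flip b) (mstar a) = mstar (m a b))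
    (a x y : A) : ⟪m a x, y⟫_ℂ = ⟪x, m (star m e a) y⟫_ℂ := by
  set x' := LinearMap.adjoint (m.flip y) x
  have hmstar : mstar y = TensorProduct.map LinearMap.id (m.flip y) (mstar e) := by
    rw [hfrob₂, hul]
  calc ⟪m a x, y⟫_ℂ = tensPair a x' (mstar e) := by rw [← hadj, hmstar, tensPair_map_id]
    _ = ⟪m a x', e⟫_ℂ := hadj a x' e
    _ = ⟪x', star m e a⟫_ℂ := by rw [← inner_conj_symm, ← inner_star, inner_conj_symm]
    _ = ⟪x, m (star m e a) y⟫_ℂ := LinearMap.adjoint_inner_left _ _ _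

section Representation

variable {m e} (hur : ∀ a : A, m a e = a)
  (hrep : ∀ a x y : A, ⟪m a x, y⟫_ℂ = ⟪x, m (star m e a) y⟫_ℂ)
include hur hrep

theorem star_star (a : A) : star m e (star m e a) = a :=
  ext_inner_right ℂ fun y => by rw [inner_star, ← hrep, hur]

theorem inner_eq_inner_unit_mul_star (x y : A) : ⟪x, y⟫_ℂ = ⟪e, m (star m e x) y⟫_ℂ := by
  rw [← inner_star, star_star hur hrep]

theorem eq_star_of_inner_eq {s : A → A} (hs : ∀ x y : A, ⟪x, y⟫_ℂ = ⟪e, m (s x) y⟫_ℂ) :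
    s = star m e := by
  funext x
  have hsx : star m e (s x) = x :=
    ext_inner_right ℂ fun y => by rw [inner_star]; exact (hs x y).symm
  rw [← star_star hur hrep (s x), hsx]

theorem star_mul (hassoc : ∀ a b c : A, m (m a b) c = m a (m b c)) (x y : A) :
    star m e (m x y) = m (star m e y) (star m e x) :=
  ext_inner_right ℂ fun z => by
    rw [inner_star, hassoc, ← inner_star, hrep, star_star hur hrep]

theorem toContinuousLinearMap_star (a : A) :
    LinearMap.toContinuousLinearMap (m (star m e a)) =
      ContinuousLinearMap.adjoint (LinearMap.toContinuousLinearMap (m a)) :=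
  (ContinuousLinearMap.eq_adjoint_iff _ _).2 fun x y => by
    simpa [star_star hur hrep] using hrep (star m e a) x y

theorem norm_toContinuousLinearMap_star_mul_self
    (hassoc : ∀ a b c : A, m (m a b) c = m a (m b c)) (x : A) :
    ‖LinearMap.toContinuousLinearMap (m (m (star m e x) x))‖ =
      ‖LinearMap.toContinuousLinearMap (m x)‖ ^ 2 := by
  have hcomp : LinearMap.toContinuousLinearMap (m (m (star m e x) x)) =
      (LinearMap.toContinuousLinearMap (m (star m e x))).comp
        (LinearMap.toContinuousLinearMap (m x)) := by
    ext y
    simp [hassoc]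
  rw [hcomp, toContinuousLinearMap_star hur hrep, ContinuousLinearMap.norm_adjoint_comp_self, sq]

end Representation

end FrobeniusAlgebra

theorem statement1_general {A : Type*} [NormedAddCommGroup A] [InnerProductSpace ℂ A]
    [FiniteDimensional ℂ A]
    (m : A →ₗ[ℂ] A →ₗ[ℂ] A) (e : A)
    (hassoc : ∀ a b c : A, m (m a b) c = m a (m b c))
    (hul : ∀ a : A, m e a = a) (hur : ∀ a : A, m a e = a)
    (mstar : A → TensorProduct ℂ A A)
    (hadj : ∀ a b y : A, tensPair a b (mstar y) = (inner ℂ (m a b) y : ℂ))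
    (hfrob₂ : ∀ a b : A,
      TensorProduct.map LinearMap.id (m.flip b) (mstar a) = mstar (m a b)) :
    -- existence and uniqueness of the conjugate-linear involution:
    (∃! s : A → A,
      (∀ x y : A, s (x + y) = s x + s y) ∧
      (∀ (c : ℂ) (x : A), s (c • x) = starRingEnd ℂ c • s x) ∧
      (∀ x y : A, (inner ℂ x y : ℂ) = (inner ℂ e (m (s x) y) : ℂ))) ∧
    -- and any such map has the stated properties:
    (∀ s : A → A,
      ((∀ x y : A, s (x + y) = s x + s y) ∧
       (∀ (c : ℂ) (x : A), s (c • x) = starRingEnd ℂ c • s x) ∧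
       (∀ x y : A, (inner ℂ x y : ℂ) = (inner ℂ e (m (s x) y) : ℂ))) →
      -- s is an involution:
      (∀ x : A, s (s x) = x) ∧
      -- s is anti-multiplicative:
      (∀ x y : A, s (m x y) = m (s y) (s x)) ∧
      -- left multiplication is a *-representation of A on the Hilbert space A:
      (∀ a x y : A, (inner ℂ (m a x) y : ℂ) = (inner ℂ x (m (s a) y) : ℂ)) ∧
      -- the operator norm of left multiplication is a genuine norm (injectivity) …
      (∀ x : A, LinearMap.toContinuousLinearMap (m x) = 0 → x = 0) ∧
      -- … satisfying the C*-identity ‖x* x‖ = ‖x‖², so A is a C*-algebra for it: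
      (∀ x : A, ‖LinearMap.toContinuousLinearMap (m (m (s x) x))‖ =
        ‖LinearMap.toContinuousLinearMap (m x)‖ ^ 2)) := by
  open FrobeniusAlgebra in
  have hrep := inner_mul_left_eq_inner_star_mul m e hul mstar hadj hfrob₂
  refine ⟨⟨star m e, ⟨map_add _, map_smulₛₗ _, inner_eq_inner_unit_mul_star hur hrep⟩,
    fun s hs => eq_star_of_inner_eq hur hrep hs.2.2⟩, ?_⟩
  rintro s ⟨-, -, hs⟩
  obtain rfl := eq_star_of_inner_eq hur hrep hs
  refine ⟨star_star hur hrep, star_mul hur hrep hassoc, hrep, fun x hx => ?_,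
    norm_toContinuousLinearMap_star_mul_self hur hrep hassoc⟩
  simpa [hur] using congrArg (· e) hx

theorem statement1 {A : Type*} [NormedAddCommGroup A] [InnerProductSpace ℂ A]
    [FiniteDimensional ℂ A]
    (m : A →ₗ[ℂ] A →ₗ[ℂ] A) (e : A)
    (hassoc : ∀ a b c : A, m (m a b) c = m a (m b c))
    (hul : ∀ a : A, m e a = a) (hur : ∀ a : A, m a e = a)
    (mstar : A → TensorProduct ℂ A A)
    (hadj : ∀ a b y : A, tensPair a b (mstar y) = (inner ℂ (m a b) y : ℂ))
    (hfrob₁ : ∀ a b : A,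
      TensorProduct.map (m a) LinearMap.id (mstar b) = mstar (m a b))
    (hfrob₂ : ∀ a b : A,
      TensorProduct.map LinearMap.id (m.flip b) (mstar a) = mstar (m a b)) :
    -- existence and uniqueness of the conjugate-linear involution:
    (∃! s : A → A,
      (∀ x y : A, s (x + y) = s x + s y) ∧
      (∀ (c : ℂ) (x : A), s (c • x) = starRingEnd ℂ c • s x) ∧
      (∀ x y : A, (inner ℂ x y : ℂ) = (inner ℂ e (m (s x) y) : ℂ))) ∧
    -- and any such map has the stated properties:
    (∀ s : A → A,
      ((∀ x y : A, s (x + y) = s x + s y) ∧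
       (∀ (c : ℂ) (x : A), s (c • x) = starRingEnd ℂ c • s x) ∧
       (∀ x y : A, (inner ℂ x y : ℂ) = (inner ℂ e (m (s x) y) : ℂ))) →
      -- s is an involution:
      (∀ x : A, s (s x) = x) ∧
      -- s is anti-multiplicative:
      (∀ x y : A, s (m x y) = m (s y) (s x)) ∧
      -- left multiplication is a *-representation of A on the Hilbert space A:
      (∀ a x y : A, (inner ℂ (m a x) y : ℂ) = (inner ℂ x (m (s a) y) : ℂ)) ∧
      -- the operator norm of left multiplication is a genuine norm (injectivity) …
      (∀ x : A, LinearMap.toContinuousLinearMap (m x) = 0 → x = 0) ∧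
      -- … satisfying the C*-identity ‖x* x‖ = ‖x‖², so A is a C*-algebra for it:
      (∀ x : A, ‖LinearMap.toContinuousLinearMap (m (m (s x) x))‖ =
        ‖LinearMap.toContinuousLinearMap (m x)‖ ^ 2)) :=
  statement1_general m e hassoc hul hur mstar hadj hfrob₂
end

section
/- Let (A, m, v) be a C*-Frobenius algebra in Hilb_f and let (X, m_X) be a left A-module in Hilb_f. Then the condition (m ⊗ id_X)(id_A ⊗ m_X*) = m_X* m_X holds if and only if m_X = (v* m ⊗ id_X)(id_A ⊗ m_X*). -/
/-!
STATEMENT 3.  Let (A, m, v) be a C*-Frobenius algebra in Hilb_f and (X, m_X) a left A-module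
in Hilb_f.  Then (m ⊗ id_X)(id_A ⊗ m_X*) = m_X* m_X  if and only if
m_X = (v* m ⊗ id_X)(id_A ⊗ m_X*).

Both sides are expressed elementwise on pure tensors a ⊗ x.  The left condition reads
TensorProduct.map (m a) id (m_X* x) = m_X*(m_X a x).  For the right condition, note that
v* = ⟪e, ·⟫ (with e = v(1)), so v* m : A ⊗ A → ℂ applied after a ⊗ (·) is the functional
(innerₛₗ ℂ e) ∘ₗ (m a); then (v* m ⊗ id_X) followed by the canonical identification
ℂ ⊗ X ≅ X (TensorProduct.lid) gives the stated map.
-/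

open scoped TensorProduct

/-! Both conditions can be tested against pure tensors through the inner product. The Frobenius
condition makes the adjoint of a left multiplication again a left multiplication,
`(m a)† = m ((m a)† e)`; pairing with `e ⊗ z`, respectively `b ⊗ z`, then turns each condition
into the other. -/

open TensorProduct LinearMap

section InnerTensor

variable {E F : Type*} [NormedAddCommGroup E] [InnerProductSpace ℂ E]
  [NormedAddCommGroup F] [InnerProductSpace ℂ F]

lemma tensPair_apply (a : E) (b : F) (t : E ⊗[ℂ] F) :
    tensPair a b t = inner ℂ (a ⊗ₜ[ℂ] b) t := by
  induction t using TensorProduct.induction_on with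
  | zero => simp
  | tmul c d => simp [tensPair]
  | add s t hs ht => simp [hs, ht, inner_add_right]

lemma innerₛₗ_comp [FiniteDimensional ℂ E] (f : E →ₗ[ℂ] E) (c : E) :
    innerₛₗ ℂ c ∘ₗ f = innerₛₗ ℂ (adjoint f c) := by
  ext x
  simp [adjoint_inner_left]

lemma inner_tmul_map_id [FiniteDimensional ℂ E] (f : E →ₗ[ℂ] E) (a : E) (b : F)
    (t : E ⊗[ℂ] F) :
    inner ℂ (a ⊗ₜ[ℂ] b) (map f id t) = inner ℂ (adjoint f a ⊗ₜ[ℂ] b) t := by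
  induction t using TensorProduct.induction_on with
  | zero => simp
  | tmul c d => simp [adjoint_inner_left]
  | add s t hs ht => simp [hs, ht, inner_add_right]

lemma inner_lid_map_innerₛₗ (c : E) (w : F) (t : E ⊗[ℂ] F) :
    inner ℂ w (TensorProduct.lid ℂ F (map (innerₛₗ ℂ c) id t)) = inner ℂ (c ⊗ₜ[ℂ] w) t := by
  induction t using TensorProduct.induction_on with
  | zero => simp
  | tmul u d => simp
  | add s t hs ht => simp [hs, ht, inner_add_right]

end InnerTensor

lemma adjoint_mul_left_eq_mul_left {A : Type*} [NormedAddCommGroup A] [InnerProductSpace ℂ A]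
    [FiniteDimensional ℂ A] (m : A →ₗ[ℂ] A →ₗ[ℂ] A) (e : A) (hul : ∀ a : A, m e a = a)
    (mstar : A → A ⊗[ℂ] A)
    (hadj : ∀ a b y : A, inner ℂ (a ⊗ₜ[ℂ] b) (mstar y) = inner ℂ (m a b) y)
    (hfrob : ∀ a b : A, map (m a) id (mstar b) = mstar (m a b)) (a b : A) :
    adjoint (m a) b = m (adjoint (m a) e) b := by
  refine ext_inner_right ℂ fun c => ?_
  calc inner ℂ (adjoint (m a) b) c
      = inner ℂ (m e b) (m a c) := by rw [adjoint_inner_left, hul]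
    _ = inner ℂ (m (adjoint (m a) e) b) c := by
      rw [← hadj, ← hfrob, inner_tmul_map_id, hadj]

theorem statement3_general {A X : Type*} [NormedAddCommGroup A] [InnerProductSpace ℂ A]
    [FiniteDimensional ℂ A] [NormedAddCommGroup X] [InnerProductSpace ℂ X]
    [FiniteDimensional ℂ X]
    -- the C*-Frobenius algebra (A, m, v) with e = v(1):
    (m : A →ₗ[ℂ] A →ₗ[ℂ] A) (e : A)
    (hul : ∀ a : A, m e a = a)
    (mstar : A → TensorProduct ℂ A A)
    (hadj : ∀ a b y : A, tensPair a b (mstar y) = (inner ℂ (m a b) y : ℂ))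
    (hfrob₁ : ∀ a b : A,
      TensorProduct.map (m a) LinearMap.id (mstar b) = mstar (m a b))
    -- the left A-module (X, m_X) in Hilb_f and the adjoint m_X*:
    (mX : A →ₗ[ℂ] X →ₗ[ℂ] X)
    (hmod : ∀ (a b : A) (x : X), mX (m a b) x = mX a (mX b x))
    (hmodu : ∀ x : X, mX e x = x)
    (mXstar : X → TensorProduct ℂ A X)
    (hadjX : ∀ (a : A) (x y : X), tensPair a x (mXstar y) = (inner ℂ (mX a x) y : ℂ)) :
    -- (m ⊗ id)(id ⊗ m_X*) = m_X* m_X  ⇔  m_X = (v* m ⊗ id)(id ⊗ m_X*):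
    (∀ (a : A) (x : X),
        TensorProduct.map (m a) LinearMap.id (mXstar x) = mXstar (mX a x)) ↔
      (∀ (a : A) (x : X),
        mX a x = TensorProduct.lid ℂ X
          (TensorProduct.map ((innerₛₗ ℂ e) ∘ₗ (m a)) LinearMap.id (mXstar x))) := by
  simp only [tensPair_apply] at hadj hadjX
  have inner_rhs : ∀ a x z, inner ℂ z (TensorProduct.lid ℂ X
      (map ((innerₛₗ ℂ e) ∘ₗ (m a)) id (mXstar x))) = inner ℂ (mX (adjoint (m a) e) z) x := by
    intro a x z
    rw [innerₛₗ_comp, inner_lid_map_innerₛₗ, hadjX]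
  constructor
  · intro h a x
    refine ext_inner_left ℂ fun z => ?_
    rw [inner_rhs, ← hadjX, ← inner_tmul_map_id, h, hadjX, hmodu]
  · intro h a x
    refine TensorProduct.ext_iff_inner_left.mpr fun b z => ?_
    rw [inner_tmul_map_id, hadjX, hadjX, h a x, inner_rhs, ← hmod,
      ← adjoint_mul_left_eq_mul_left m e hul mstar hadj hfrob₁]

theorem statement3 {A X : Type*} [NormedAddCommGroup A] [InnerProductSpace ℂ A]
    [FiniteDimensional ℂ A] [NormedAddCommGroup X] [InnerProductSpace ℂ X]
    [FiniteDimensional ℂ X]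
    -- the C*-Frobenius algebra (A, m, v) with e = v(1):
    (m : A →ₗ[ℂ] A →ₗ[ℂ] A) (e : A)
    (hassoc : ∀ a b c : A, m (m a b) c = m a (m b c))
    (hul : ∀ a : A, m e a = a) (hur : ∀ a : A, m a e = a)
    (mstar : A → TensorProduct ℂ A A)
    (hadj : ∀ a b y : A, tensPair a b (mstar y) = (inner ℂ (m a b) y : ℂ))
    (hfrob₁ : ∀ a b : A,
      TensorProduct.map (m a) LinearMap.id (mstar b) = mstar (m a b))
    (hfrob₂ : ∀ a b : A,
      TensorProduct.map LinearMap.id (m.flip b) (mstar a) = mstar (m a b))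
    -- the left A-module (X, m_X) in Hilb_f and the adjoint m_X*:
    (mX : A →ₗ[ℂ] X →ₗ[ℂ] X)
    (hmod : ∀ (a b : A) (x : X), mX (m a b) x = mX a (mX b x))
    (hmodu : ∀ x : X, mX e x = x)
    (mXstar : X → TensorProduct ℂ A X)
    (hadjX : ∀ (a : A) (x y : X), tensPair a x (mXstar y) = (inner ℂ (mX a x) y : ℂ)) :
    -- (m ⊗ id)(id ⊗ m_X*) = m_X* m_X  ⇔  m_X = (v* m ⊗ id)(id ⊗ m_X*):
    (∀ (a : A) (x : X),
        TensorProduct.map (m a) LinearMap.id (mXstar x) = mXstar (mX a x)) ↔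
      (∀ (a : A) (x : X),
        mX a x = TensorProduct.lid ℂ X
          (TensorProduct.map ((innerₛₗ ℂ e) ∘ₗ (m a)) LinearMap.id (mXstar x))) :=
  statement3_general m e hul mstar hadj hfrob₁ mX hmod hmodu mXstar hadjX
end

section
/- Let (A, φ_A) and (B, φ_B) be Frobenius C*-algebras and let T : A → B be an algebra isomorphism (a bijective ℂ-linear map with T(x y) = T(x) T(y) for all x, y). Let T* : B → A be the adjoint of T with respect to the inner products induced by φ_A and φ_B. Then T is *-preserving (T(x*) = T(x)* for all x ∈ A) if and only if T* T : A → A is a left A-module map, i.e. T* T(a b) = a · T* T(b) for all a, b ∈ A. -/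
/-!
Both directions come from moving multiplications across the pairing `φ(star x * y)`.
If `T` is a `*`-map, then `star (T x) * T a = T (star (star a * x))`, which moves `a` from the
right slot into the left one. Conversely, a left module map satisfies
`T* T (star x) = star x * T* T 1`, and pairing against `T y` shows that `T (star x)` and
`star (T x)` have the same pairings with every element of `B = T A`; faithfulness of the
functionals makes these pairings separate points.
-/

open scoped ComplexOrder

theorem eq_of_forall_map_star_mul_eq {R M : Type*} [NonUnitalRing R] [StarRing R] [AddGroup M]
    (φ : R →+ M) (hφ : ∀ a, φ (star a * a) = 0 → a = 0) {u v : R}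
    (h : ∀ x, φ (star x * u) = φ (star x * v)) : u = v := by
  refine sub_eq_zero.mp (hφ _ ?_)
  rw [mul_sub, map_sub, h, sub_self]

section Adjoint

variable {A B M : Type*} {T : A → B} {Ts : B → A}

theorem adjoint_map_mul_of_map_star [Ring A] [StarRing A] [Semigroup B] [StarMul B]
    [AddGroup M] (φA : A →+ M) (φB : B → M) (hφA : ∀ a, φA (star a * a) = 0 → a = 0)
    (hmul : ∀ x y, T (x * y) = T x * T y)
    (hadj : ∀ x y, φB (star (T x) * y) = φA (star x * Ts y))
    (hstar : ∀ x, T (star x) = star (T x)) (a b : A) :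
    Ts (T (a * b)) = a * Ts (T b) := by
  refine eq_of_forall_map_star_mul_eq φA hφA fun x => ?_
  have hmove : star (T x) * T a = star (T (star a * x)) := by
    rw [hmul, hstar, star_mul, star_star]
  calc φA (star x * Ts (T (a * b)))
      = φB (star (T x) * T (a * b)) := (hadj x _).symm
    _ = φB (star (T (star a * x)) * T b) := by rw [hmul, ← mul_assoc, hmove]
    _ = φA (star (star a * x) * Ts (T b)) := hadj _ _
    _ = φA (star x * (a * Ts (T b))) := by rw [star_mul, star_star, mul_assoc]

theorem map_star_of_adjoint_map_mul [Monoid A] [StarMul A] [Ring B] [StarRing B]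
    [AddGroup M] (φA : A → M) (φB : B →+ M) (hφB : ∀ b, φB (star b * b) = 0 → b = 0)
    (hsurj : Function.Surjective T) (hone : T 1 = 1) (hmul : ∀ x y, T (x * y) = T x * T y)
    (hadj : ∀ x y, φB (star (T x) * y) = φA (star x * Ts y))
    (hmod : ∀ a b, Ts (T (a * b)) = a * Ts (T b)) (x : A) :
    T (star x) = star (T x) := by
  refine eq_of_forall_map_star_mul_eq φB hφB fun w => ?_
  obtain ⟨y, rfl⟩ := hsurj w
  have hstar_x : Ts (T (star x)) = star x * Ts (T 1) := by
    simpa only [mul_one] using hmod (star x) 1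
  calc φB (star (T y) * T (star x))
      = φA (star y * (star x * Ts (T 1))) := by rw [hadj, hstar_x]
    _ = φA (star (x * y) * Ts (T 1)) := by rw [star_mul, mul_assoc]
    _ = φB (star (T y) * star (T x)) := by rw [← hadj, hone, mul_one, hmul, star_mul]

end Adjoint

theorem statement4_general {A B : Type*}
    [NormedRing A] [StarRing A] [NormedAlgebra ℂ A]
    [NormedRing B] [StarRing B] [NormedAlgebra ℂ B]
    (φA : A →ₗ[ℂ] ℂ) (φB : B →ₗ[ℂ] ℂ)
    (hfaithA : ∀ a : A, φA (star a * a) = 0 → a = 0)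
    (hfaithB : ∀ b : B, φB (star b * b) = 0 → b = 0)
    (T : A →ₗ[ℂ] B) (hTbij : Function.Bijective T)
    (hTmul : ∀ x y : A, T (x * y) = T x * T y)
    (Ts : B → A)
    (hTadj : ∀ (x : A) (y : B), φB (star (T x) * y) = φA (star x * Ts y)) :
    (∀ x : A, T (star x) = star (T x)) ↔
      (∀ a b : A, Ts (T (a * b)) = a * Ts (T b)) := by
  have hone : T 1 = 1 := map_one (MulEquiv.ofBijective (⟨T, hTmul⟩ : A →ₙ* B) hTbij)
  exact ⟨adjoint_map_mul_of_map_star (φA : A →+ ℂ) φB hfaithA hTmul hTadj,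
    map_star_of_adjoint_map_mul φA (φB : B →+ ℂ) hfaithB hTbij.2 hone hTmul hTadj⟩

theorem statement4 {A B : Type*}
    [NormedRing A] [StarRing A] [CStarRing A] [NormedAlgebra ℂ A] [StarModule ℂ A]
    [FiniteDimensional ℂ A]
    [NormedRing B] [StarRing B] [CStarRing B] [NormedAlgebra ℂ B] [StarModule ℂ B]
    [FiniteDimensional ℂ B]
    (φA : A →ₗ[ℂ] ℂ) (φB : B →ₗ[ℂ] ℂ)
    (hposA : ∀ a : A, 0 ≤ φA (star a * a)) (hfaithA : ∀ a : A, φA (star a * a) = 0 → a = 0)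
    (hposB : ∀ b : B, 0 ≤ φB (star b * b)) (hfaithB : ∀ b : B, φB (star b * b) = 0 → b = 0)
    (T : A →ₗ[ℂ] B) (hTbij : Function.Bijective T)
    (hTmul : ∀ x y : A, T (x * y) = T x * T y)
    (Ts : B → A)
    (hTadj : ∀ (x : A) (y : B), φB (star (T x) * y) = φA (star x * Ts y)) :
    (∀ x : A, T (star x) = star (T x)) ↔
      (∀ a b : A, Ts (T (a * b)) = a * Ts (T b)) :=
  statement4_general φA φB hfaithA hfaithB T hTbij hTmul Ts hTadj
end

section
/- With A, B, C, ψ_B, ψ_C, the bases (x_i), (y_j) and dual bases (x^i), (y^j), and the nonzero scalar λ as in the context, the following are equivalent: (1) ∑_{i,j} x^i y^j x_i ⊗ y_j = λ (1 ⊗ 1) in the algebraic tensor product A ⊗_ℂ A; (2) ∑_i x^i y x_i = λ ψ_C(y) · 1 in A for every y ∈ C. -/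
/-!
Since `ψ_C(y_j yᵏ) = δ_jk` and `C` is `n`-dimensional, the `yᵏ` form a basis of `C` in which
`z = ∑_j ψ_C(y_j z) yʲ`; dually `1 = ∑_j ψ_C(yʲ) y_j`. With `T z = ∑_i xⁱ z x_i`, condition (1)
reads `∑_j T(yʲ) ⊗ y_j = λ • 1 ⊗ 1`. Under (2) the left side is `λ • 1 ⊗ ∑_j ψ_C(yʲ) y_j`.
Conversely, apply `a ⊗ b ↦ g(b z) • a` to (1), where `g` extends `ψ_C` to `A`: the left side
becomes `T(∑_j ψ_C(y_j z) yʲ) = T z` and the right side `λ ψ_C(z) • 1`.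
-/

open scoped TensorProduct

namespace Module.Basis

variable {K C ι : Type*} [Field K] [Ring C] [Algebra K C] [Fintype ι] [DecidableEq ι]
  {ψ : C →ₗ[K] K} {y : Basis ι K C} {yd : ι → C}

variable (hdual : ∀ j k, ψ (y j * yd k) = if j = k then 1 else 0)
include hdual

theorem apply_mul_sum_smul_dual (c : ι → K) (j : ι) : ψ (y j * ∑ k, c k • yd k) = c j := by
  simp [Finset.mul_sum, hdual]

theorem apply_sum_smul_mul_dual (c : ι → K) (k : ι) : ψ ((∑ j, c j • y j) * yd k) = c k := by
  simp [Finset.sum_mul, hdual]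

theorem linearIndependent_dual : LinearIndependent K yd :=
  Fintype.linearIndependent_iff.2 fun c hc j => by
    simpa [hc] using (apply_mul_sum_smul_dual hdual c j).symm

theorem sum_apply_mul_smul_dual (z : C) : ∑ j, ψ (y j * z) • yd j = z := by
  have : FiniteDimensional K C := .of_basis y
  have hspan := (linearIndependent_dual hdual).span_eq_top_of_card_eq_finrank'
    (Module.finrank_eq_card_basis y).symm
  obtain ⟨c, rfl⟩ :=
    (Submodule.mem_span_range_iff_exists_fun K).1 (hspan ▸ Submodule.mem_top (x := z))
  simp only [apply_mul_sum_smul_dual hdual]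

theorem sum_apply_dual_smul_eq_one : ∑ j, ψ (yd j) • y j = 1 := by
  obtain ⟨c, hc⟩ : ∃ c : ι → K, ∑ j, c j • y j = 1 := ⟨_, y.sum_repr 1⟩
  conv_rhs => rw [← hc]
  refine Finset.sum_congr rfl fun k _ => ?_
  rw [← one_mul (yd k), ← hc, apply_sum_smul_mul_dual hdual]

end Module.Basis

namespace Subalgebra

variable {K A M ι : Type*} [Field K] [Ring A] [Algebra K A] [AddCommGroup M] [Module K M]
  [Fintype ι] [DecidableEq ι] {C : Subalgebra K A} {ψ : C →ₗ[K] K} {y : Module.Basis ι K C}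
  {yd : ι → C}

theorem sum_dual_tmul_eq_tmul_one_iff (hdual : ∀ j k, ψ (y j * yd k) = if j = k then 1 else 0)
    (T : C →ₗ[K] M) (m : M) :
    ∑ j, T (yd j) ⊗ₜ[K] (y j : A) = m ⊗ₜ[K] (1 : A) ↔ ∀ z, T z = ψ z • m := by
  constructor
  · intro h z
    obtain ⟨g, hg⟩ := LinearMap.exists_extend (p := Subalgebra.toSubmodule C) ψ
    have hgC : ∀ c : C, g c = ψ c := LinearMap.congr_fun hg
    let F : M ⊗[K] A →ₗ[K] M :=
      TensorProduct.rid K M ∘ₗ (g ∘ₗ LinearMap.mulRight K (z : A)).lTensor M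
    have hF : ∀ a b, F (a ⊗ₜ b) = g (b * z) • a := fun _ _ => rfl
    have hFh := congrArg F h
    simp only [map_sum, hF, one_mul, ← Subalgebra.coe_mul, hgC] at hFh
    conv_lhs => rw [← Module.Basis.sum_apply_mul_smul_dual hdual z, map_sum]
    simpa only [map_smul] using hFh
  · intro h
    simp only [h, TensorProduct.smul_tmul, ← TensorProduct.tmul_sum]
    congr
    exact_mod_cast Module.Basis.sum_apply_dual_smul_eq_one hdual

end Subalgebra

theorem statement10_general {A : Type*} [Ring A] [Algebra ℂ A]
    (B C : Subalgebra ℂ A) {m n : ℕ}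
    (x : Module.Basis (Fin m) ℂ B) (xd : Fin m → B)
    (y : Module.Basis (Fin n) ℂ C) (yd : Fin n → C)
    (ψC : C →ₗ[ℂ] ℂ)
    -- dual-basis relations:
    (hdualC : ∀ j k, ψC (y j * yd k) = if j = k then 1 else 0)
    (lam : ℂ) :
    (∑ i, ∑ j, ((xd i : A) * (yd j : A) * (x i : A)) ⊗ₜ[ℂ] (y j : A) =
        lam • ((1 : A) ⊗ₜ[ℂ] (1 : A))) ↔
      (∀ z : C, ∑ i, (xd i : A) * (z : A) * (x i : A) = (lam * ψC z) • (1 : A)) := by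
  let T : C →ₗ[ℂ] A :=
    (∑ i, LinearMap.mulLeftRight ℂ ((xd i : A), (x i : A))) ∘ₗ C.val.toLinearMap
  have hT : ∀ z : C, T z = ∑ i, (xd i : A) * z * x i := fun z => by simp [T]
  have hiff := C.sum_dual_tmul_eq_tmul_one_iff hdualC T (lam • 1)
  simp only [hT, TensorProduct.sum_tmul, smul_smul, mul_comm (ψC _)] at hiff
  rwa [Finset.sum_comm, TensorProduct.smul_tmul']

theorem statement10 {A : Type*} [Ring A] [Algebra ℂ A]
    (B C : Subalgebra ℂ A) {m n : ℕ}
    (x : Module.Basis (Fin m) ℂ B) (xd : Fin m → B)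
    (y : Module.Basis (Fin n) ℂ C) (yd : Fin n → C)
    (ψB : B →ₗ[ℂ] ℂ) (ψC : C →ₗ[ℂ] ℂ)
    -- nondegeneracy of the pairings:
    (hndB₁ : ∀ b : B, (∀ b' : B, ψB (b * b') = 0) → b = 0)
    (hndB₂ : ∀ b : B, (∀ b' : B, ψB (b' * b) = 0) → b = 0)
    (hndC₁ : ∀ c : C, (∀ c' : C, ψC (c * c') = 0) → c = 0)
    (hndC₂ : ∀ c : C, (∀ c' : C, ψC (c' * c) = 0) → c = 0)
    -- dual-basis relations:
    (hdualB : ∀ i j, ψB (x i * xd j) = if i = j then 1 else 0)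
    (hdualC : ∀ j k, ψC (y j * yd k) = if j = k then 1 else 0)
    (lam : ℂ) (hlam : lam ≠ 0) :
    (∑ i, ∑ j, ((xd i : A) * (yd j : A) * (x i : A)) ⊗ₜ[ℂ] (y j : A) =
        lam • ((1 : A) ⊗ₜ[ℂ] (1 : A))) ↔
      (∀ z : C, ∑ i, (xd i : A) * (z : A) * (x i : A) = (lam * ψC z) • (1 : A)) :=
  statement10_general B C x xd y yd ψC hdualC lam
end

section
/- With A, B, C, ψ_B, ψ_C, the bases (x_i), (y_j) and dual bases (x^i), (y^j), and the nonzero scalar λ as in the context, assume that ∑_i x^i z x_i = λ ψ_C(z) · 1 for all z ∈ C and ∑_j y^j w y_j = λ ψ_B(w) · 1 for all w ∈ B. Then the linear maps S : B ⊗_ℂ A → C ⊗_ℂ A, b ⊗ a ↦ ∑_j y^j ⊗ b y_j a, and T : C ⊗_ℂ A → B ⊗_ℂ A, c ⊗ a ↦ λ^{-1} ∑_i x^i ⊗ c x_i a, are mutually inverse bijections: S T = id and T S = id. -/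
/-!
Sandwiching `c` between the two dual-basis sums collapses it: by the key identity
`∑ᵢ xⁱ (yⱼ c) xᵢ = λ ψ_C(yⱼ c)`, so `S (T (c ⊗ a)) = ∑ⱼ ψ_C(yⱼ c) yʲ ⊗ a`, and this is `c ⊗ a`
because `c = ∑ⱼ ψ_C(yⱼ c) yʲ` is the dual-basis expansion of `c`. The other composite is the same
computation with the roles of `B` and `C` exchanged.
-/

open scoped TensorProduct

theorem Module.Basis.sum_pairing_smul_dual_eq {R B ι : Type*} [CommRing R] [Ring B] [Algebra R B]
    [Fintype ι] [DecidableEq ι] (x : Module.Basis ι R B) (xd : ι → B) (ψ : B →ₗ[R] R)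
    (hnd : ∀ v : B, (∀ b' : B, ψ (b' * v) = 0) → v = 0)
    (hdual : ∀ i j, ψ (x i * xd j) = if i = j then 1 else 0) (b : B) :
    ∑ i, ψ (x i * b) • xd i = b := by
  symm
  rw [← sub_eq_zero]
  refine hnd _ fun b' => ?_
  have hvanish : ψ ∘ₗ LinearMap.mulRight R (b - ∑ i, ψ (x i * b) • xd i) = 0 :=
    x.ext fun k => by
      simp [mul_sub, Finset.mul_sum, hdual]
  exact LinearMap.congr_fun hvanish b'

theorem sum_sum_tmul_dual_sandwich {R A ι κ : Type*} [CommRing R] [Ring A] [Algebra R A]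
    [Fintype ι] [Fintype κ] [DecidableEq κ] (C : Subalgebra R A) (x xd : ι → A)
    (y : Module.Basis κ R C) (yd : κ → C) (ψ : C →ₗ[R] R)
    (hnd : ∀ v : C, (∀ c' : C, ψ (c' * v) = 0) → v = 0)
    (hdual : ∀ j k, ψ (y j * yd k) = if j = k then 1 else 0) (lam : R)
    (hkey : ∀ z : C, ∑ i, xd i * (z : A) * x i = (lam * ψ z) • (1 : A)) (c : C) (a : A) :
    ∑ i, ∑ j, yd j ⊗ₜ[R] (xd i * (y j : A) * ((c : A) * x i * a)) = lam • (c ⊗ₜ[R] a) := by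
  have hcollapse : ∀ j, ∑ i, xd i * (y j : A) * ((c : A) * x i * a) = (lam * ψ (y j * c)) • a := by
    intro j
    rw [← smul_one_mul, ← hkey, Finset.sum_mul]
    refine Finset.sum_congr rfl fun i _ => ?_
    simp only [Subalgebra.coe_mul, mul_assoc]
  calc ∑ i, ∑ j, yd j ⊗ₜ[R] (xd i * (y j : A) * ((c : A) * x i * a))
      = ∑ j, lam • (ψ (y j * c) • yd j) ⊗ₜ[R] a := by
        rw [Finset.sum_comm]
        refine Finset.sum_congr rfl fun j _ => ?_
        rw [← TensorProduct.tmul_sum, hcollapse, mul_smul, TensorProduct.tmul_smul,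
          ← TensorProduct.smul_tmul]
    _ = lam • (c ⊗ₜ[R] a) := by
        rw [← Finset.smul_sum, ← TensorProduct.sum_tmul,
          y.sum_pairing_smul_dual_eq yd ψ hnd hdual]

theorem statement11_general {A : Type*} [Ring A] [Algebra ℂ A]
    (B C : Subalgebra ℂ A) {m n : ℕ}
    (x : Module.Basis (Fin m) ℂ B) (xd : Fin m → B)
    (y : Module.Basis (Fin n) ℂ C) (yd : Fin n → C)
    (ψB : B →ₗ[ℂ] ℂ) (ψC : C →ₗ[ℂ] ℂ)
    -- nondegeneracy of the pairings:
    (hndB₂ : ∀ b : B, (∀ b' : B, ψB (b' * b) = 0) → b = 0)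
    (hndC₂ : ∀ c : C, (∀ c' : C, ψC (c' * c) = 0) → c = 0)
    -- dual-basis relations:
    (hdualB : ∀ i j, ψB (x i * xd j) = if i = j then 1 else 0)
    (hdualC : ∀ j k, ψC (y j * yd k) = if j = k then 1 else 0)
    (lam : ℂ) (hlam : lam ≠ 0)
    -- the key identities:
    (hkeyB : ∀ z : C, ∑ i, (xd i : A) * (z : A) * (x i : A) = (lam * ψC z) • (1 : A))
    (hkeyC : ∀ w : B, ∑ j, (yd j : A) * (w : A) * (y j : A) = (lam * ψB w) • (1 : A))
    -- the maps S and T: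
    (S : TensorProduct ℂ B A →ₗ[ℂ] TensorProduct ℂ C A)
    (T : TensorProduct ℂ C A →ₗ[ℂ] TensorProduct ℂ B A)
    (hS : ∀ (b : B) (a : A),
      S (b ⊗ₜ[ℂ] a) = ∑ j, (yd j) ⊗ₜ[ℂ] ((b : A) * (y j : A) * a))
    (hT : ∀ (c : C) (a : A),
      T (c ⊗ₜ[ℂ] a) = lam⁻¹ • ∑ i, (xd i) ⊗ₜ[ℂ] ((c : A) * (x i : A) * a)) :
    (∀ u : TensorProduct ℂ C A, S (T u) = u) ∧
    (∀ u : TensorProduct ℂ B A, T (S u) = u) := by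
  have hST : S ∘ₗ T = LinearMap.id := TensorProduct.ext' fun c a => by
    simp only [LinearMap.comp_apply, LinearMap.id_apply, hT, map_smul, map_sum, hS]
    rw [sum_sum_tmul_dual_sandwich C (fun i => (x i : A)) (fun i => (xd i : A)) y yd ψC hndC₂
      hdualC lam hkeyB, inv_smul_smul₀ hlam]
  have hTS : T ∘ₗ S = LinearMap.id := TensorProduct.ext' fun b a => by
    simp only [LinearMap.comp_apply, LinearMap.id_apply, hS, map_sum, hT, ← Finset.smul_sum]
    rw [sum_sum_tmul_dual_sandwich B (fun j => (y j : A)) (fun j => (yd j : A)) x xd ψB hndB₂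
      hdualB lam hkeyC, inv_smul_smul₀ hlam]
  exact ⟨LinearMap.congr_fun hST, LinearMap.congr_fun hTS⟩

theorem statement11 {A : Type*} [Ring A] [Algebra ℂ A]
    (B C : Subalgebra ℂ A) {m n : ℕ}
    (x : Module.Basis (Fin m) ℂ B) (xd : Fin m → B)
    (y : Module.Basis (Fin n) ℂ C) (yd : Fin n → C)
    (ψB : B →ₗ[ℂ] ℂ) (ψC : C →ₗ[ℂ] ℂ)
    -- nondegeneracy of the pairings:
    (hndB₁ : ∀ b : B, (∀ b' : B, ψB (b * b') = 0) → b = 0)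
    (hndB₂ : ∀ b : B, (∀ b' : B, ψB (b' * b) = 0) → b = 0)
    (hndC₁ : ∀ c : C, (∀ c' : C, ψC (c * c') = 0) → c = 0)
    (hndC₂ : ∀ c : C, (∀ c' : C, ψC (c' * c) = 0) → c = 0)
    -- dual-basis relations:
    (hdualB : ∀ i j, ψB (x i * xd j) = if i = j then 1 else 0)
    (hdualC : ∀ j k, ψC (y j * yd k) = if j = k then 1 else 0)
    (lam : ℂ) (hlam : lam ≠ 0)
    -- the key identities:
    (hkeyB : ∀ z : C, ∑ i, (xd i : A) * (z : A) * (x i : A) = (lam * ψC z) • (1 : A))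
    (hkeyC : ∀ w : B, ∑ j, (yd j : A) * (w : A) * (y j : A) = (lam * ψB w) • (1 : A))
    -- the maps S and T:
    (S : TensorProduct ℂ B A →ₗ[ℂ] TensorProduct ℂ C A)
    (T : TensorProduct ℂ C A →ₗ[ℂ] TensorProduct ℂ B A)
    (hS : ∀ (b : B) (a : A),
      S (b ⊗ₜ[ℂ] a) = ∑ j, (yd j) ⊗ₜ[ℂ] ((b : A) * (y j : A) * a))
    (hT : ∀ (c : C) (a : A),
      T (c ⊗ₜ[ℂ] a) = lam⁻¹ • ∑ i, (xd i) ⊗ₜ[ℂ] ((c : A) * (x i : A) * a)) :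
    (∀ u : TensorProduct ℂ C A, S (T u) = u) ∧
    (∀ u : TensorProduct ℂ B A, T (S u) = u) :=
  statement11_general B C x xd y yd ψB ψC hndB₂ hndC₂ hdualB hdualC lam hlam hkeyB hkeyC S T hS hT
end

section
/- With A, B, C, ψ_B, ψ_C, the bases (x_i), (y_j) and dual bases (x^i), (y^j), and the nonzero scalar λ as in the context, assume in addition that ψ_B(1) = 1 and ψ_C(1) = 1, and that ∑_i x^i z x_i = λ ψ_C(z) · 1 for all z ∈ C and ∑_j y^j w y_j = λ ψ_B(w) · 1 for all w ∈ B. Then the relative commutants are trivial: {y ∈ C : y b = b y for all b ∈ B} = ℂ · 1 and {x ∈ B : x c = c x for all c ∈ C} = ℂ · 1. -/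
/-!
Putting `z = 1` in the key identity gives `∑ i, xⁱ xᵢ = λ • 1`. If `z` commutes with every `xᵢ`,
it can be pulled out to the right of each term, so `λ ψ_C(z) • 1 = ∑ i, xⁱ z xᵢ = λ • z`,
and `λ ≠ 0` forces `z = ψ_C(z) • 1`. The other commutant is handled symmetrically.
-/

section RelativeCommutant

variable {K A ι : Type*} [Field K] [Ring A] [Algebra K A] [Fintype ι]

theorem sum_mul_mul_eq_sum_mul_mul_of_commute (a b : ι → A) {z : A}
    (hz : ∀ i, Commute z (b i)) :
    ∑ i, a i * z * b i = (∑ i, a i * b i) * z := by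
  rw [Finset.sum_mul]
  exact Finset.sum_congr rfl fun i _ => by rw [mul_assoc, (hz i).eq, ← mul_assoc]

theorem eq_smul_one_of_sum_mul_mul_eq (a b : ι → A) {lam c : K} (hlam : lam ≠ 0)
    (h1 : ∑ i, a i * b i = lam • (1 : A)) {z : A} (hz : ∑ i, a i * z * b i = (lam * c) • (1 : A))
    (hcomm : ∀ i, Commute z (b i)) :
    z = c • (1 : A) := by
  have hlamz : lam • z = lam • c • (1 : A) := by
    rw [smul_smul, ← hz, sum_mul_mul_eq_sum_mul_mul_of_commute a b hcomm, h1, smul_one_mul]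
  rw [← inv_smul_smul₀ hlam z, hlamz, inv_smul_smul₀ hlam]

theorem forall_mul_comm_iff_exists_eq_smul_one (B C : Subalgebra K A) (a : ι → A) (b : ι → B)
    (φ : C → K) {lam : K} (hlam : lam ≠ 0) (hφ1 : φ 1 = 1)
    (hkey : ∀ z : C, ∑ i, a i * (z : A) * (b i : A) = (lam * φ z) • (1 : A)) (z : C) :
    (∀ w : B, (z : A) * (w : A) = (w : A) * (z : A)) ↔ ∃ c : K, (z : A) = c • (1 : A) := by
  constructor
  · intro hcomm
    have h1 : ∑ i, a i * (b i : A) = lam • (1 : A) := by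
      simpa [hφ1] using hkey 1
    exact ⟨φ z, eq_smul_one_of_sum_mul_mul_eq a (fun i => (b i : A)) hlam h1 (hkey z)
      fun i => hcomm (b i)⟩
  · rintro ⟨c, hc⟩ w
    rw [hc]
    exact ((Commute.one_left (w : A)).smul_left c).eq

end RelativeCommutant

theorem statement12_general {A : Type*} [Ring A] [Algebra ℂ A]
    (B C : Subalgebra ℂ A) {m n : ℕ}
    (x : Module.Basis (Fin m) ℂ B) (xd : Fin m → B)
    (y : Module.Basis (Fin n) ℂ C) (yd : Fin n → C)
    (ψB : B →ₗ[ℂ] ℂ) (ψC : C →ₗ[ℂ] ℂ)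
    (lam : ℂ) (hlam : lam ≠ 0)
    -- ψ_B and ψ_C are unital:
    (hψB1 : ψB 1 = 1) (hψC1 : ψC 1 = 1)
    -- the key identities:
    (hkeyB : ∀ z : C, ∑ i, (xd i : A) * (z : A) * (x i : A) = (lam * ψC z) • (1 : A))
    (hkeyC : ∀ w : B, ∑ j, (yd j : A) * (w : A) * (y j : A) = (lam * ψB w) • (1 : A)) :
    -- the relative commutants are trivial:
    (∀ z : C, (∀ w : B, (z : A) * (w : A) = (w : A) * (z : A)) ↔
      ∃ c : ℂ, (z : A) = c • (1 : A)) ∧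
    (∀ w : B, (∀ z : C, (w : A) * (z : A) = (z : A) * (w : A)) ↔
      ∃ c : ℂ, (w : A) = c • (1 : A)) :=
  ⟨forall_mul_comm_iff_exists_eq_smul_one B C (fun i => (xd i : A)) x ψC hlam hψC1 hkeyB,
    forall_mul_comm_iff_exists_eq_smul_one C B (fun j => (yd j : A)) y ψB hlam hψB1 hkeyC⟩

theorem statement12 {A : Type*} [Ring A] [Algebra ℂ A]
    (B C : Subalgebra ℂ A) {m n : ℕ}
    (x : Module.Basis (Fin m) ℂ B) (xd : Fin m → B)
    (y : Module.Basis (Fin n) ℂ C) (yd : Fin n → C)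
    (ψB : B →ₗ[ℂ] ℂ) (ψC : C →ₗ[ℂ] ℂ)
    -- nondegeneracy of the pairings:
    (hndB₁ : ∀ b : B, (∀ b' : B, ψB (b * b') = 0) → b = 0)
    (hndB₂ : ∀ b : B, (∀ b' : B, ψB (b' * b) = 0) → b = 0)
    (hndC₁ : ∀ c : C, (∀ c' : C, ψC (c * c') = 0) → c = 0)
    (hndC₂ : ∀ c : C, (∀ c' : C, ψC (c' * c) = 0) → c = 0)
    -- dual-basis relations:
    (hdualB : ∀ i j, ψB (x i * xd j) = if i = j then 1 else 0)
    (hdualC : ∀ j k, ψC (y j * yd k) = if j = k then 1 else 0)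
    (lam : ℂ) (hlam : lam ≠ 0)
    -- ψ_B and ψ_C are unital:
    (hψB1 : ψB 1 = 1) (hψC1 : ψC 1 = 1)
    -- the key identities:
    (hkeyB : ∀ z : C, ∑ i, (xd i : A) * (z : A) * (x i : A) = (lam * ψC z) • (1 : A))
    (hkeyC : ∀ w : B, ∑ j, (yd j : A) * (w : A) * (y j : A) = (lam * ψB w) • (1 : A)) :
    -- the relative commutants are trivial:
    (∀ z : C, (∀ w : B, (z : A) * (w : A) = (w : A) * (z : A)) ↔
      ∃ c : ℂ, (z : A) = c • (1 : A)) ∧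
    (∀ w : B, (∀ z : C, (w : A) * (z : A) = (z : A) * (w : A)) ↔
      ∃ c : ℂ, (w : A) = c • (1 : A)) :=
  statement12_general B C x xd y yd ψB ψC lam hlam hψB1 hψC1 hkeyB hkeyC
end

section
/- Let G be a finite group acting by ℂ-algebra automorphisms on a unital associative ℂ-algebra B, and let A ⊆ B be a G-invariant unital subalgebra containing the unit of B. If the Galois map Γ_A : A ⊗_{A^G} A → F(G, A), a ⊗ a' ↦ (g ↦ g(a) a'), is surjective, then the Galois map Γ_B : B ⊗_{B^G} B → F(G, B), b ⊗ b' ↦ (g ↦ g(b) b'), is also surjective. -/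
/-!
The range of Γ_B is stable under right multiplication by constants, since
Γ_B(b ⊗ b' c) = Γ_B(b ⊗ b') · c. Through the inclusion A ⊗ A → B ⊗ B it contains the range of
Γ_A, hence every indicator function δ_h; so it contains every f = ∑_h δ_h · f(h).
-/

open scoped TensorProduct

section GaloisMap

variable {R G B : Type*} [CommSemiring R] [Semiring B] [Algebra R B]

theorem galoisMap_mul_const_mem_range (σ : G → B → B) (Γ : B ⊗[R] B →ₗ[R] (G → B))
    (hΓ : ∀ (b b' : B) (g : G), Γ (b ⊗ₜ b') g = σ g b * b') (t : B ⊗[R] B) (c : B) :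
    Γ t * Function.const G c ∈ LinearMap.range Γ := by
  have hcomm : Γ ∘ₗ (LinearMap.mulRight R c).lTensor B =
      LinearMap.mulRight R (Function.const G c) ∘ₗ Γ :=
    TensorProduct.ext' fun b b' => funext fun g => by simp [hΓ, mul_assoc]
  exact ⟨(LinearMap.mulRight R c).lTensor B t, LinearMap.congr_fun hcomm t⟩

theorem galoisMap_comp_map_val (σ : G → B → B) (A : Subalgebra R B)
    (ΓA : A ⊗[R] A →ₗ[R] (G → A))
    (hΓA : ∀ (a a' : A) (g : G), (ΓA (a ⊗ₜ a') g : B) = σ g a * a')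
    (ΓB : B ⊗[R] B →ₗ[R] (G → B))
    (hΓB : ∀ (b b' : B) (g : G), ΓB (b ⊗ₜ b') g = σ g b * b') :
    ΓB ∘ₗ TensorProduct.map A.val.toLinearMap A.val.toLinearMap =
      A.val.toLinearMap.compLeft G ∘ₗ ΓA :=
  TensorProduct.ext' fun a a' => funext fun g => by simp [hΓA, hΓB]

end GaloisMap

theorem Submodule.eq_top_of_single_one_mem_of_mul_const_mem {R G B : Type*} [CommSemiring R]
    [Semiring B] [Algebra R B] [Fintype G] [DecidableEq G] {p : Submodule R (G → B)}
    (hsingle : ∀ h, Pi.single h 1 ∈ p) (hmul : ∀ x ∈ p, ∀ c, x * Function.const G c ∈ p) :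
    p = ⊤ := by
  refine eq_top_iff.2 fun f _ => ?_
  rw [← Finset.univ_sum_single f]
  refine p.sum_mem fun h _ => ?_
  have hsplit : Pi.single h (f h) = Pi.single h 1 * Function.const G (f h) := by
    rw [← Pi.single_mul_left, Function.const_apply, one_mul]
  exact hsplit ▸ hmul _ (hsingle h) (f h)

theorem statement14_general {G B : Type*} [Group G] [Fintype G] [Ring B] [Algebra ℂ B]
    (ρ : G →* (B ≃ₐ[ℂ] B))
    (A : Subalgebra ℂ B)
    (ΓA : TensorProduct ℂ A A →ₗ[ℂ] (G → A))
    (hΓA : ∀ (a a' : A) (g : G), (ΓA (a ⊗ₜ[ℂ] a') g : B) = ρ g (a : B) * (a' : B))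
    (ΓB : TensorProduct ℂ B B →ₗ[ℂ] (G → B))
    (hΓB : ∀ (b b' : B) (g : G), ΓB (b ⊗ₜ[ℂ] b') g = ρ g b * b')
    (hsurjA : Function.Surjective ΓA) :
    Function.Surjective ΓB := by
  classical
  rw [← LinearMap.range_eq_top]
  refine Submodule.eq_top_of_single_one_mem_of_mul_const_mem (fun h => ?_)
    fun _ ⟨t, ht⟩ c => ht ▸ galoisMap_mul_const_mem_range (fun g => ρ g) ΓB hΓB t c
  obtain ⟨t, ht⟩ := hsurjA (Pi.single h 1)
  refine ⟨TensorProduct.map A.val.toLinearMap A.val.toLinearMap t, ?_⟩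
  have hcomm : ΓB (TensorProduct.map A.val.toLinearMap A.val.toLinearMap t) =
      A.val.toLinearMap.compLeft G (ΓA t) :=
    LinearMap.congr_fun (galoisMap_comp_map_val (fun g => ρ g) A ΓA hΓA ΓB hΓB) t
  rw [hcomm, ht]
  ext g
  by_cases hg : g = h <;> simp [hg]

theorem statement14 {G B : Type*} [Group G] [Fintype G] [Ring B] [Algebra ℂ B]
    (ρ : G →* (B ≃ₐ[ℂ] B))
    (A : Subalgebra ℂ B) (hA : ∀ (g : G), ∀ a ∈ A, ρ g a ∈ A)
    (ΓA : TensorProduct ℂ A A →ₗ[ℂ] (G → A))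
    (hΓA : ∀ (a a' : A) (g : G), (ΓA (a ⊗ₜ[ℂ] a') g : B) = ρ g (a : B) * (a' : B))
    (ΓB : TensorProduct ℂ B B →ₗ[ℂ] (G → B))
    (hΓB : ∀ (b b' : B) (g : G), ΓB (b ⊗ₜ[ℂ] b') g = ρ g b * b')
    (hsurjA : Function.Surjective ΓA) :
    Function.Surjective ΓB :=
  statement14_general ρ A ΓA hΓA ΓB hΓB hsurjA
end
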